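/- arXiv:1502.06784 — 4 statements merged into one kernel-verified Lean document; each statement's English description precedes it below -/
import Mathlib

section
/- Let B be a real K×L matrix and let R be the (L+K)×(L+K) block matrix R = [[0, −Bᵀ],[B, 0]]. Then the matrices I + BᵀB and I + BBᵀ are invertible, and the Cayley transform of R satisfies (I + R)(I − R)⁻¹ = (I + R)² · blockdiag((I + BᵀB)⁻¹, (I + BBᵀ)⁻¹). -/
open Matrix

/-- For a real `K × L` matrix `B` and the block skew-symmetric matrix
`R = [[0, -Bᵀ], [B, 0]]`, the matrices `I + BᵀB` and `I + BBᵀ` are invertible, and the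
Cayley transform of `R` satisfies
`(I + R)(I - R)⁻¹ = (I + R)² * blockdiag((I + BᵀB)⁻¹, (I + BBᵀ)⁻¹)`. -/
theorem cayley_transform_block_formula (K L : ℕ) (B : Matrix (Fin K) (Fin L) ℝ) :
    IsUnit (1 + B.transpose * B) ∧ IsUnit (1 + B * B.transpose) ∧
      (let R : Matrix (Fin L ⊕ Fin K) (Fin L ⊕ Fin K) ℝ :=
        Matrix.fromBlocks 0 (-B.transpose) B 0
      (1 + R) * (1 - R)⁻¹ =
        (1 + R) ^ 2 *
          Matrix.fromBlocks (1 + B.transpose * B)⁻¹ 0 0 (1 + B * B.transpose)⁻¹) := by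
  have h1 : IsUnit (1 + B.transpose * B) := by
    have := (Matrix.PosDef.one (R := ℝ) (n := Fin L)).add_posSemidef
      (Matrix.posSemidef_conjTranspose_mul_self B)
    rw [conjTranspose_eq_transpose_of_trivial] at this
    exact this.isUnit
  have h2 : IsUnit (1 + B * B.transpose) := by
    have := (Matrix.PosDef.one (R := ℝ) (n := Fin K)).add_posSemidef
      (Matrix.posSemidef_self_mul_conjTranspose B)
    rw [conjTranspose_eq_transpose_of_trivial] at this
    exact this.isUnit
  refine ⟨h1, h2, ?_⟩
  intro R
  set D : Matrix (Fin L ⊕ Fin K) (Fin L ⊕ Fin K) ℝ :=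
    Matrix.fromBlocks (1 + B.transpose * B) 0 0 (1 + B * B.transpose) with hD
  have hprod : (1 - R) * (1 + R) = D := by
    have : R * R = Matrix.fromBlocks (-(B.transpose * B)) 0 0 (-(B * B.transpose)) := by
      simp [R, Matrix.fromBlocks_multiply]
    rw [hD]
    have h : (1 - R) * (1 + R) = 1 - R * R := by noncomm_ring
    rw [h, this, sub_eq_add_neg, Matrix.fromBlocks_neg, ← Matrix.fromBlocks_one]
    simp only [neg_neg, neg_zero]
    rw [Matrix.fromBlocks_add]
    simp
  have hDunit : IsUnit D := by
    rw [hD, Matrix.isUnit_fromBlocks_zero₁₂]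
    exact ⟨h1, h2⟩
  have hdets : IsUnit ((1 - R).det * (1 + R).det) := by
    rw [← Matrix.det_mul, hprod]
    exact (Matrix.isUnit_iff_isUnit_det D).mp hDunit
  have hsub : IsUnit (1 - R) :=
    (Matrix.isUnit_iff_isUnit_det _).mpr (isUnit_of_mul_isUnit_left hdets)
  have hadd : IsUnit (1 + R) :=
    (Matrix.isUnit_iff_isUnit_det _).mpr (isUnit_of_mul_isUnit_right hdets)
  have hDinv : D⁻¹ = Matrix.fromBlocks (1 + B.transpose * B)⁻¹ 0 0 (1 + B * B.transpose)⁻¹ := by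
    rw [hD, Matrix.inv_fromBlocks_zero₂₁_of_isUnit_iff _ _ _ (by simp [h1, h2])]
    simp
  have hinv : (1 - R)⁻¹ = (1 + R) * D⁻¹ := by
    apply Matrix.inv_eq_right_inv
    rw [← Matrix.mul_assoc, hprod, Matrix.mul_nonsing_inv _ ((Matrix.isUnit_iff_isUnit_det D).mp hDunit)]
  rw [hinv, ← Matrix.mul_assoc, ← pow_two, hDinv]
end

section
/- Let B be a real n×n orthogonal matrix (BᵀB = I) and let R be the 2n×2n block matrix R = [[0, −Bᵀ],[B, 0]]. Then the Cayley transform of R equals R itself: (I + R)(I − R)⁻¹ = R. -/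
/-- If `B` is a real `n × n` orthogonal matrix (`BᵀB = I`) and
`R = [[0, -Bᵀ], [B, 0]]`, then the Cayley transform of `R` equals `R` itself:
`(I + R)(I - R)⁻¹ = R`. -/
theorem cayley_transform_of_orthogonal_block (n : ℕ) (B : Matrix (Fin n) (Fin n) ℝ)
    (hB : B.transpose * B = 1) :
    (let R : Matrix (Fin n ⊕ Fin n) (Fin n ⊕ Fin n) ℝ :=
      Matrix.fromBlocks 0 (-B.transpose) B 0
    (1 + R) * (1 - R)⁻¹ = R) := by
  intro R
  have hB' : B * B.transpose = 1 := mul_eq_one_comm.mp hB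
  have hR2 : R * R = -1 := by
    show Matrix.fromBlocks 0 (-B.transpose) B 0 * Matrix.fromBlocks 0 (-B.transpose) B 0 = -1
    rw [Matrix.fromBlocks_multiply]
    simp [hB, hB', ← Matrix.fromBlocks_one, Matrix.fromBlocks_neg]
  have hinv : (1 - R)⁻¹ = (2:ℝ)⁻¹ • (1 + R) := by
    apply Matrix.inv_eq_right_inv
    rw [Matrix.mul_smul, sub_mul, one_mul, mul_add, mul_one, hR2]
    have h2 : (1 : Matrix (Fin n ⊕ Fin n) (Fin n ⊕ Fin n) ℝ) + R - (R + -1)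
        = (2:ℝ) • (1 : Matrix (Fin n ⊕ Fin n) (Fin n ⊕ Fin n) ℝ) := by
      rw [two_smul]; abel
    rw [h2, smul_smul]
    norm_num
  rw [hinv, Matrix.mul_smul, add_mul, one_mul, mul_add, mul_one, hR2]
  have : (1 : Matrix (Fin n ⊕ Fin n) (Fin n ⊕ Fin n) ℝ) + R + (R + -1) = (2:ℝ) • R := by
    rw [two_smul]; abel
  rw [this, smul_smul]
  norm_num
end

section
/- Let G be a real (p+q)×(p+q) orthogonal matrix block-partitioned as G = [[G₁₁, G₁₂],[G₂₁, G₂₂]] with G₁₁ of size p×p, and let S be a real p×p orthogonal matrix such that I − S·G₁₁ is invertible. Then the reduced matrix G' = G₂₂ + G₂₁(I − S·G₁₁)⁻¹·S·G₁₂ is orthogonal: G'ᵀG' = I. -/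
open Matrix

lemma reduced_aux_key {p : ℕ} (A M : Matrix (Fin p) (Fin p) ℝ)
    (hMl : (1 - A) * M = 1) :
    M.transpose * ((1 - A.transpose * A) * M) = 1 + A * M + M.transpose * A.transpose := by
  have hNr : M.transpose * (1 - A.transpose) = 1 := by
    have := congrArg Matrix.transpose hMl
    simpa [Matrix.transpose_mul, Matrix.transpose_sub] using this
  have hsplit : (1 : Matrix (Fin p) (Fin p) ℝ) - A.transpose * A =
      (1 - A.transpose) * (1 - A) + (1 - A.transpose) * A + A.transpose * (1 - A) := by
    noncomm_ring
  rw [hsplit]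
  calc M.transpose * (((1 - A.transpose) * (1 - A) + (1 - A.transpose) * A
        + A.transpose * (1 - A)) * M)
      = (M.transpose * (1 - A.transpose)) * ((1 - A) * M)
        + (M.transpose * (1 - A.transpose)) * (A * M)
        + (M.transpose * A.transpose) * ((1 - A) * M) := by noncomm_ring
    _ = 1 + A * M + M.transpose * A.transpose := by rw [hNr, hMl]; simp

lemma reduced_aux_W {p : ℕ} (G₁₁ S M : Matrix (Fin p) (Fin p) ℝ)
    (hSorth : S.transpose * S = 1) (hSS : S * S.transpose = 1)
    (hMl : (1 - S * G₁₁) * M = 1) :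
    S.transpose * (M.transpose * ((1 - G₁₁.transpose * G₁₁) * (M * S)))
      - G₁₁ * (M * S) - S.transpose * (M.transpose * G₁₁.transpose) = 1 := by
  set A := S * G₁₁ with hAdef
  have hG11 : G₁₁ = S.transpose * A := by
    rw [hAdef, ← Matrix.mul_assoc, hSorth, Matrix.one_mul]
  have h11 : G₁₁.transpose * G₁₁ = A.transpose * A := by
    rw [hG11, Matrix.transpose_mul, Matrix.transpose_transpose]
    calc A.transpose * S * (S.transpose * A) = A.transpose * (S * S.transpose) * A := by
          noncomm_ring
      _ = A.transpose * A := by rw [hSS]; simp [Matrix.mul_assoc]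
  have key := reduced_aux_key A M hMl
  rw [h11, hG11]
  calc S.transpose * (M.transpose * ((1 - A.transpose * A) * (M * S)))
        - S.transpose * A * (M * S)
        - S.transpose * (M.transpose * (S.transpose * A).transpose)
      = S.transpose * ((M.transpose * ((1 - A.transpose * A) * M)
          - A * M - M.transpose * A.transpose) * S) := by
        simp only [Matrix.transpose_mul, Matrix.transpose_transpose]
        noncomm_ring
    _ = S.transpose * ((1 : Matrix (Fin p) (Fin p) ℝ) * S) := by
        rw [key]
        congr 1
        congr 1
        noncomm_ring
    _ = 1 := by rw [Matrix.one_mul, hSorth]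

lemma reduced_aux {p q : ℕ}
    (G₁₁ : Matrix (Fin p) (Fin p) ℝ) (G₁₂ : Matrix (Fin p) (Fin q) ℝ)
    (G₂₁ : Matrix (Fin q) (Fin p) ℝ) (G₂₂ : Matrix (Fin q) (Fin q) ℝ)
    (e₁ : G₁₁.transpose * G₁₁ + G₂₁.transpose * G₂₁ = 1)
    (e₂ : G₁₁.transpose * G₁₂ + G₂₁.transpose * G₂₂ = 0)
    (e₃ : G₁₂.transpose * G₁₁ + G₂₂.transpose * G₂₁ = 0)
    (e₄ : G₁₂.transpose * G₁₂ + G₂₂.transpose * G₂₂ = 1)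
    (S M : Matrix (Fin p) (Fin p) ℝ)
    (hSorth : S.transpose * S = 1) (hSS : S * S.transpose = 1)
    (hMl : (1 - S * G₁₁) * M = 1) :
    (G₂₂ + G₂₁ * M * S * G₁₂).transpose * (G₂₂ + G₂₁ * M * S * G₁₂) = 1 := by
  have hW := reduced_aux_W G₁₁ S M hSorth hSS hMl
  have f₁ : G₂₂.transpose * G₂₂ = 1 - G₁₂.transpose * G₁₂ := by
    rw [← e₄]; abel
  have f₂ : G₂₂.transpose * G₂₁ = -(G₁₂.transpose * G₁₁) :=
    eq_neg_of_add_eq_zero_right e₃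
  have f₃ : G₂₁.transpose * G₂₂ = -(G₁₁.transpose * G₁₂) :=
    eq_neg_of_add_eq_zero_right e₂
  have f₄ : G₂₁.transpose * G₂₁ = 1 - G₁₁.transpose * G₁₁ := by
    rw [← e₁]; abel
  calc (G₂₂ + G₂₁ * M * S * G₁₂).transpose * (G₂₂ + G₂₁ * M * S * G₁₂)
      = G₂₂.transpose * G₂₂ + (G₂₂.transpose * G₂₁) * (M * (S * G₁₂))
        + (G₁₂.transpose * (S.transpose * M.transpose)) * (G₂₁.transpose * G₂₂)
        + (G₁₂.transpose * (S.transpose * M.transpose))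
            * ((G₂₁.transpose * G₂₁) * (M * (S * G₁₂))) := by
        simp only [Matrix.transpose_add, Matrix.transpose_mul, Matrix.add_mul,
          Matrix.mul_add, Matrix.mul_assoc]
        abel
    _ = (1 - G₁₂.transpose * G₁₂) + (-(G₁₂.transpose * G₁₁)) * (M * (S * G₁₂))
        + (G₁₂.transpose * (S.transpose * M.transpose)) * (-(G₁₁.transpose * G₁₂))
        + (G₁₂.transpose * (S.transpose * M.transpose))
            * ((1 - G₁₁.transpose * G₁₁) * (M * (S * G₁₂))) := by
        rw [f₁, f₂, f₃, f₄]
    _ = 1 - G₁₂.transpose * G₁₂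
        + G₁₂.transpose * ((S.transpose * (M.transpose * ((1 - G₁₁.transpose * G₁₁) * (M * S)))
            - G₁₁ * (M * S) - S.transpose * (M.transpose * G₁₁.transpose)) * G₁₂) := by
        simp only [Matrix.sub_mul, Matrix.mul_sub, Matrix.add_mul, Matrix.mul_add,
          Matrix.neg_mul, Matrix.mul_neg, Matrix.mul_assoc, Matrix.mul_one, Matrix.one_mul,
          sub_eq_add_neg]
        abel
    _ = 1 := by rw [hW, Matrix.one_mul]; abel

/-- If `G = [[G₁₁, G₁₂], [G₂₁, G₂₂]]` is orthogonal and `S` is orthogonal with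
`I - S G₁₁` invertible, then the reduced matrix
`G' = G₂₂ + G₂₁ (I - S G₁₁)⁻¹ S G₁₂` is orthogonal: `G'ᵀ G' = I`. -/
theorem reduced_matrix_orthogonal (p q : ℕ)
    (G₁₁ : Matrix (Fin p) (Fin p) ℝ) (G₁₂ : Matrix (Fin p) (Fin q) ℝ)
    (G₂₁ : Matrix (Fin q) (Fin p) ℝ) (G₂₂ : Matrix (Fin q) (Fin q) ℝ)
    (hG : (Matrix.fromBlocks G₁₁ G₁₂ G₂₁ G₂₂).transpose *
        Matrix.fromBlocks G₁₁ G₁₂ G₂₁ G₂₂ = 1)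
    (S : Matrix (Fin p) (Fin p) ℝ) (hSorth : S.transpose * S = 1)
    (hS : IsUnit (1 - S * G₁₁)) :
    (G₂₂ + G₂₁ * (1 - S * G₁₁)⁻¹ * S * G₁₂).transpose *
      (G₂₂ + G₂₁ * (1 - S * G₁₁)⁻¹ * S * G₁₂) = 1 := by
  rw [Matrix.fromBlocks_transpose, Matrix.fromBlocks_multiply, ← Matrix.fromBlocks_one,
    Matrix.fromBlocks_inj] at hG
  obtain ⟨e₁, e₂, e₃, e₄⟩ := hG
  have hSS : S * S.transpose = 1 := mul_eq_one_comm.mp hSorth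
  have hdet : IsUnit (1 - S * G₁₁).det := (Matrix.isUnit_iff_isUnit_det _).mp hS
  exact reduced_aux G₁₁ G₁₂ G₂₁ G₂₂ e₁ e₂ e₃ e₄ S _ hSorth hSS
    (Matrix.mul_nonsing_inv _ hdet)
end

section
/- Let p ∈ (0,1), L ∈ [0,1), C ≥ 0, and let a : ℤ → ℝ satisfy 0 ≤ a(n) ≤ C for all n ∈ ℤ and a(n) ≤ L² · Σ_{m=1}^{∞} p(1−p)^{m−1} a(n−m) for all n ≥ 0. Then a(n) → 0 as n → ∞. -/
open Filter

/-- Asymptotic average convergence from the convolution bound: if `p ∈ (0,1)`,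
`L ∈ [0,1)`, `a : ℤ → ℝ` is bounded with `0 ≤ a(n) ≤ C`, and for all `n ≥ 0`
`a(n) ≤ L² Σ_{m=1}^{∞} p (1-p)^{m-1} a(n - m)`, then `a(n) → 0` as `n → ∞`. -/
theorem convolution_bound_tendsto_zero (p L C : ℝ)
    (hp : 0 < p) (hp1 : p < 1) (hL0 : 0 ≤ L) (hL1 : L < 1) (hC : 0 ≤ C)
    (a : ℤ → ℝ) (ha0 : ∀ n : ℤ, 0 ≤ a n) (haC : ∀ n : ℤ, a n ≤ C)
    (hbound : ∀ n : ℤ, 0 ≤ n →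
      a n ≤ L ^ 2 * ∑' m : ℕ, p * (1 - p) ^ m * a (n - (m + 1))) :
    Filter.Tendsto a Filter.atTop (nhds 0) := by
  set q : ℝ := 1 - p with hqdef
  have hq0 : 0 ≤ q := by simp [hqdef]; linarith
  have hq1 : q < 1 := by simp [hqdef]; linarith
  have hgeo : Summable (fun m : ℕ => q ^ m) := summable_geometric_of_lt_one hq0 hq1
  have hone : ∑' m : ℕ, p * q ^ m = 1 := by
    rw [tsum_mul_left, tsum_geometric_of_lt_one hq0 hq1]
    have : 1 - q = p := by simp [hqdef]
    rw [this]
    field_simp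
  have hL2 : L ^ 2 < 1 := by nlinarith
  have hL20 : 0 ≤ L ^ 2 := by positivity
  -- summability of the convolution terms
  have hgsum : ∀ n : ℤ, Summable (fun m : ℕ => p * q ^ m * a (n - (m + 1))) := by
    intro n
    apply Summable.of_nonneg_of_le
      (fun m => by have := ha0 (n - (m+1)); positivity)
      (fun m => by
        have := haC (n - (m+1))
        have h1 : 0 ≤ p * q ^ m := by positivity
        calc p * q ^ m * a (n - (m+1)) ≤ p * q ^ m * C := by nlinarith
          _ = C * (p * q ^ m) := by ring)
    exact (hgeo.mul_left p).mul_right C |>.congr (fun m => by ring)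
  -- key step lemma
  have key : ∀ B : ℝ, 0 ≤ B → ∀ M : ℕ, ∀ N : ℤ, (∀ n ≥ N, a n ≤ B) →
      ∀ n : ℤ, max 0 (N + M) ≤ n → a n ≤ L ^ 2 * (B + q ^ M * C) := by
    intro B hB M N hN n hn
    have hn0 : (0:ℤ) ≤ n := le_trans (le_max_left _ _) hn
    have hnNM : N + M ≤ n := le_trans (le_max_right _ _) hn
    refine (hbound n hn0).trans ?_
    rw [← Summable.sum_add_tsum_nat_add M (hgsum n)]
    have hhead : ∑ m ∈ Finset.range M, p * q ^ m * a (n - (m + 1)) ≤ B := by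
      have h1 : ∑ m ∈ Finset.range M, p * q ^ m * a (n - (m + 1)) ≤
          ∑ m ∈ Finset.range M, p * q ^ m * B := by
        apply Finset.sum_le_sum
        intro m hm
        have hmM : (m : ℤ) + 1 ≤ (M : ℤ) := by
          have := Finset.mem_range.mp hm
          exact_mod_cast this
        have : N ≤ n - (m + 1) := by omega
        have h2 := hN _ this
        have h3 : 0 ≤ p * q ^ m := by positivity
        nlinarith
      refine h1.trans ?_
      have h2 : ∑ m ∈ Finset.range M, p * q ^ m * B ≤ ∑' m : ℕ, p * q ^ m * B := by
        apply Summable.sum_le_tsum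
        · intro m _; positivity
        · exact ((hgeo.mul_left p).mul_right B).congr (fun m => by ring)
      refine h2.trans ?_
      rw [tsum_mul_right, hone, one_mul]
    have htail : ∑' m : ℕ, p * q ^ (m + M) * a (n - (m + M + 1)) ≤ q ^ M * C := by
      have h1 : ∑' m : ℕ, p * q ^ (m + M) * a (n - (m + M + 1)) ≤
          ∑' m : ℕ, q ^ M * C * (p * q ^ m) := by
        apply Summable.tsum_le_tsum
        · intro m
          have := haC (n - (m + M + 1))
          have h3 : 0 ≤ p * q ^ (m + M) := by positivity
          have : p * q ^ (m + M) * a (n - (m + M + 1)) ≤ p * q ^ (m + M) * C := by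
            nlinarith
          refine this.trans (le_of_eq ?_)
          rw [pow_add]; ring
        · exact ((hgsum n).comp_injective (add_right_injective M)).congr
            (fun m => by simp [Function.comp]; ring_nf)
        · exact ((hgeo.mul_left p).mul_left (q ^ M * C)).congr (fun m => by ring)
      refine h1.trans (le_of_eq ?_)
      rw [tsum_mul_left, hone, mul_one]
    have hterm : ∀ m : ℕ, p * q ^ (m + M) * a (n - (↑(m + M) + 1)) =
        p * q ^ (m + M) * a (n - ((m : ℤ) + M + 1)) := by
      intro m; push_cast; ring_nf
    have heq : ∑' m : ℕ, p * q ^ (m + M) * a (n - (↑(m + M) + 1)) =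
        ∑' m : ℕ, p * q ^ (m + M) * a (n - ((m : ℤ) + M + 1)) := tsum_congr hterm
    rw [heq]
    have hfin : (∑ m ∈ Finset.range M, p * q ^ m * a (n - (m + 1))) +
        ∑' m : ℕ, p * q ^ (m + M) * a (n - ((m : ℤ) + M + 1)) ≤ B + q ^ M * C := by
      linarith
    exact mul_le_mul_of_nonneg_left hfin hL20
  -- induction: a n ≤ (L²)^k C + ε eventually
  have step : ∀ ε : ℝ, 0 < ε → ∀ k : ℕ, ∃ N : ℤ, ∀ n ≥ N, a n ≤ (L ^ 2) ^ k * C + ε := by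
    intro ε hε k
    induction k with
    | zero => exact ⟨0, fun n _ => by simpa using (haC n).trans (by linarith)⟩
    | succ k ih =>
      obtain ⟨N, hN⟩ := ih
      set B := (L ^ 2) ^ k * C + ε with hBdef
      have hB : 0 ≤ B := by positivity
      have hδ : (0:ℝ) < (1 - L ^ 2) * ε := by
        apply mul_pos (by linarith) hε
      have htend : Tendsto (fun M : ℕ => L ^ 2 * C * q ^ M) atTop (nhds 0) := by
        simpa using (tendsto_pow_atTop_nhds_zero_of_lt_one hq0 hq1).const_mul (L ^ 2 * C)
      obtain ⟨M, hM⟩ := (htend.eventually_le_const hδ).exists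
      refine ⟨max 0 (N + M), fun n hn => ?_⟩
      have h1 := key B hB M N hN n hn
      calc a n ≤ L ^ 2 * (B + q ^ M * C) := h1
        _ = (L ^ 2) ^ (k + 1) * C + L ^ 2 * ε + L ^ 2 * C * q ^ M := by
            rw [hBdef]; ring
        _ ≤ (L ^ 2) ^ (k + 1) * C + L ^ 2 * ε + (1 - L ^ 2) * ε := by linarith
        _ ≤ (L ^ 2) ^ (k + 1) * C + ε := by nlinarith
  -- conclude
  rw [Metric.tendsto_atTop]
  intro ε hε
  have htend : Tendsto (fun k : ℕ => (L ^ 2) ^ k * C) atTop (nhds 0) := by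
    simpa using ((tendsto_pow_atTop_nhds_zero_of_lt_one hL20 hL2).mul_const C)
  obtain ⟨k, hk⟩ := (htend.eventually_lt_const (show (0:ℝ) < ε / 2 by linarith)).exists
  obtain ⟨N, hN⟩ := step (ε / 4) (by linarith) k
  refine ⟨N, fun n hn => ?_⟩
  have h1 := hN n hn
  rw [Real.dist_eq, sub_zero, abs_of_nonneg (ha0 n)]
  linarith
end
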